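/- arXiv:2401.09845 — 2 statements merged into one kernel-verified Lean document; each statement's English description precedes it below -/
import Mathlib

section
/- Assume C has full span and let χ : ℝ^C → ℝ^N be the equitable solution, i.e., χ(v) = τ(ψ, γ) for any representation (ψ, γ) of v (this is well-defined by the invariance of the equitable solution across representations). If players i and j are symmetric in the game v : C → ℝ, then χ_i(v) = χ_j(v). -/
open Finset
open scoped Classical

/-! Common definitions: games on a collection `C` of coalitions of a finite
player set `N`, MM-games, full span, assignments, representations, the
equitable solution, and the Shapley value. -/

/-- The MM-game `w_S`, as a vector in `ℝ^C`:
`w_S(T) = 1` if `S` meets `T` (i.e. `S ∩ T ≠ ∅`) and `0` if `S` misses `T`. -/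
noncomputable def mmGame {N : Type} [DecidableEq N] (C : Finset (Finset N))
    (S : Finset N) : {T : Finset N // T ∈ C} → ℝ :=
  fun T => if (S ∩ T.1).Nonempty then 1 else 0

/-- `C` has full span: the family of MM-games `{w_S}_{S ∈ C}` is a basis of `ℝ^C`,
i.e. it is linearly independent and spans `ℝ^C`. -/
def FullSpan {N : Type} [DecidableEq N] (C : Finset (Finset N)) : Prop :=
  LinearIndependent ℝ (fun S : {S : Finset N // S ∈ C} => mmGame C S.1) ∧
  Submodule.span ℝ (Set.range fun S : {S : Finset N // S ∈ C} => mmGame C S.1) = ⊤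

/-- The full user-set `ψ⁻¹(k) = {n ∈ N : k ∈ ψ(n)}` of facility `k`. -/
noncomputable def userSet {N K : Type} [Fintype N] (ψ : N → Finset K) (k : K) :
    Finset N :=
  Finset.univ.filter fun n => k ∈ ψ n

/-- `(ψ, γ)` is a representation of the game `v : C → ℝ`.  The set of facilities
is `K = ψ(N) = ⋃_{n ∈ N} ψ(n)` (every facility has a nonempty full user-set);
we require `ψ⁻¹(k) ∈ C` for every facility `k`, and
`v(S) = ∑_{k ∈ ψ(S)} γ(k)` for every `S ∈ C`, where `ψ(S) = ⋃_{n ∈ S} ψ(n)`. -/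
def IsRep {N : Type} [Fintype N] [DecidableEq N] (C : Finset (Finset N))
    (v : {T : Finset N // T ∈ C} → ℝ) {K : Type} (ψ : N → Finset K)
    (γ : K → ℝ) : Prop :=
  (∀ k ∈ Finset.univ.biUnion ψ, userSet ψ k ∈ C) ∧
  ∀ T : {T : Finset N // T ∈ C}, v T = ∑ k ∈ T.1.biUnion ψ, γ k

/-- The equitable solution `τ(ψ, γ) ∈ ℝ^N`:
`τ_n(ψ,γ) = ∑_{k ∈ ψ(n)} γ(k)/|ψ⁻¹(k)|`. -/
noncomputable def tau {N K : Type} [Fintype N] (ψ : N → Finset K) (γ : K → ℝ)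
    (n : N) : ℝ :=
  ∑ k ∈ ψ n, γ k / ((userSet ψ k).card : ℝ)

/-- The Shapley value `φ_n(v)` of a game on all coalitions of `N`
(`v ∅` is understood to be `0`):
`φ_n(v) = ∑_{S ⊆ N∖{n}} (|S|!(|N|−1−|S|)!/|N|!)·(v(S∪{n}) − v(S))`. -/
noncomputable def shapley {N : Type} [Fintype N] [DecidableEq N]
    (v : Finset N → ℝ) (n : N) : ℝ :=
  ∑ S ∈ (Finset.univ.erase n).powerset,
    ((S.card.factorial : ℝ) * ((Fintype.card N - 1 - S.card).factorial : ℝ) /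
      ((Fintype.card N).factorial : ℝ)) * (v (insert n S) - v S)

/-- `C` is a semi-algebra: `N ∈ C`, and `N∖S ∈ C` for every `S ∈ C` with `S ≠ N`. -/
def IsSemiAlgebra {N : Type} [Fintype N] [DecidableEq N]
    (C : Finset (Finset N)) : Prop :=
  Finset.univ ∈ C ∧ ∀ S ∈ C, S ≠ Finset.univ → Finset.univ \ S ∈ C

/-- `C` is hierarchical: its elements can be arranged in a sequence
`S_1, …, S_l` such that for every `k = 2, …, l`, (i) `S_1` meets `S_k`, and
(ii) some `T ∈ C` misses `S_k` and meets each of `S_1, …, S_{k−1}`.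
(Indices are `0, …, l-1` here, with `S_1` the element of index `0`.) -/
def IsHierarchy {N : Type} [DecidableEq N] (C : Finset (Finset N)) : Prop :=
  ∃ (l : ℕ) (hl : 0 < l) (S : Fin l → Finset N),
    Function.Injective S ∧ (∀ k, S k ∈ C) ∧ (∀ T ∈ C, ∃ k, S k = T) ∧
    ∀ k : Fin l, 0 < (k : ℕ) →
      ((S ⟨0, hl⟩ ∩ S k).Nonempty ∧
       ∃ T ∈ C, T ∩ S k = ∅ ∧
         ∀ j : Fin l, (j : ℕ) < (k : ℕ) → (T ∩ S j).Nonempty)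

/-- Players `i` and `j` are symmetric in the game `v : C → ℝ`. -/
def SymmetricPlayers {N : Type} [DecidableEq N] (C : Finset (Finset N))
    (v : {T : Finset N // T ∈ C} → ℝ) (i j : N) : Prop :=
  ∀ T : Finset N, i ∉ T → j ∉ T →
    (insert i T ∈ C ↔ insert j T ∈ C) ∧
    ∀ (hi : insert i T ∈ C) (hj : insert j T ∈ C),
      v ⟨insert i T, hi⟩ = v ⟨insert j T, hj⟩

/-- Player `i` is a dummy in the game `v : C → ℝ`. -/
def DummyPlayer {N : Type} [DecidableEq N] (C : Finset (Finset N))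
    (v : {T : Finset N // T ∈ C} → ℝ) (i : N) : Prop :=
  (∀ h : ({i} : Finset N) ∈ C, v ⟨{i}, h⟩ = 0) ∧
  ∀ T : Finset N, T.Nonempty → i ∉ T →
    (insert i T ∈ C ↔ T ∈ C) ∧
    ∀ (hiT : insert i T ∈ C) (hT : T ∈ C), v ⟨insert i T, hiT⟩ = v ⟨T, hT⟩

/-! A representation `(ψ, γ)` of `v` writes `v = ∑_{S ∈ C} a_S w_S`, where `a_S` is the total
weight of the facilities with user set `S`, and then `τ_n = ∑_{S ∋ n} a_S / |S|`. By symmetry the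
transposition `σ = (i j)` maps `C` onto itself and preserves `v`; since `w_{σS}(σT) = w_S(T)`, the
coefficients `S ↦ a_{σS}` represent `v` as well, so linear independence of the MM-games forces
`a_{σS} = a_S`. Reindexing the formula for `τ` by `σ` then gives `τ_i = τ_j`. -/

theorem mem_userSet {N K : Type} [Fintype N] {ψ : N → Finset K} {k : K} {n : N} :
    n ∈ userSet ψ k ↔ k ∈ ψ n := by
  simp [userSet]

section
variable {N K : Type} {C : Finset (Finset N)}

theorem map_finsetCongr_eq_self {σ : Equiv.Perm N} (hσ : ∀ S ∈ C, S.map σ.toEmbedding ∈ C) :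
    C.map σ.finsetCongr.toEmbedding = C :=
  eq_of_subset_of_card_le (fun _ hS => by
    obtain ⟨S, hSC, rfl⟩ := mem_map.1 hS
    exact hσ S hSC) (card_map _).ge

theorem sum_map_perm_eq_of_mapsTo {σ : Equiv.Perm N} (hσ : ∀ S ∈ C, S.map σ.toEmbedding ∈ C)
    (f : Finset N → ℝ) : ∑ S ∈ C, f (S.map σ.toEmbedding) = ∑ S ∈ C, f S := by
  conv_rhs => rw [← map_finsetCongr_eq_self hσ, sum_map]
  rfl

variable [DecidableEq N]

theorem eq_on_of_sum_mul_mmGame_eq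
    (hli : LinearIndependent ℝ fun S : {S // S ∈ C} => mmGame C S.1) {a b : Finset N → ℝ}
    (h : ∀ T, ∑ S ∈ C, a S * mmGame C S T = ∑ S ∈ C, b S * mmGame C S T) :
    ∀ S ∈ C, a S = b S := by
  intro S hS
  refine sub_eq_zero.1 (Fintype.linearIndependent_iff.1 hli (fun S => a S - b S) ?_ ⟨S, hS⟩)
  ext T
  simp only [Finset.sum_apply, Pi.smul_apply, smul_eq_mul, sub_mul, sum_sub_distrib,
    sum_coe_sort C (fun S => a S * mmGame C S T), sum_coe_sort C (fun S => b S * mmGame C S T), h,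
    sub_self, Pi.zero_apply]

def IsGameAutomorphism (C : Finset (Finset N)) (v : {T : Finset N // T ∈ C} → ℝ)
    (σ : Equiv.Perm N) : Prop :=
  ∀ S (hS : S ∈ C), ∃ hσS : S.map σ.toEmbedding ∈ C, v ⟨_, hσS⟩ = v ⟨S, hS⟩

theorem map_swap_eq_self_of_iff {i j : N} {S : Finset N} (h : i ∈ S ↔ j ∈ S) :
    S.map (Equiv.swap i j).toEmbedding = S := by
  ext x
  rw [mem_map_equiv, Equiv.symm_swap, Equiv.swap_apply_def]
  split_ifs with hi hj <;> subst_vars <;> tauto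

theorem map_swap_insert {i j : N} {T : Finset N} (hi : i ∉ T) (hj : j ∉ T) :
    (insert i T).map (Equiv.swap i j).toEmbedding = insert j T := by
  rw [map_insert, map_swap_eq_self_of_iff (iff_of_false hi hj), Equiv.toEmbedding_apply,
    Equiv.swap_apply_left]

theorem SymmetricPlayers.symm {v : {T : Finset N // T ∈ C} → ℝ} {i j : N}
    (hsym : SymmetricPlayers C v i j) : SymmetricPlayers C v j i := fun T hj hi =>
  ⟨(hsym T hi hj).1.symm, fun h h' => ((hsym T hi hj).2 h' h).symm⟩

theorem SymmetricPlayers.isGameAutomorphism_swap {v : {T : Finset N // T ∈ C} → ℝ} {i j : N}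
    (hsym : SymmetricPlayers C v i j) : IsGameAutomorphism C v (Equiv.swap i j) := by
  intro S hS
  by_cases hij : i ∈ S ↔ j ∈ S
  · rw [map_swap_eq_self_of_iff hij]
    exact ⟨hS, rfl⟩
  wlog hi : i ∈ S generalizing i j
  · rw [Equiv.swap_comm]
    exact this hsym.symm (by tauto) (by tauto)
  obtain ⟨T, hiT, hjT, rfl⟩ : ∃ T, i ∉ T ∧ j ∉ T ∧ S = insert i T :=
    ⟨S.erase i, notMem_erase i S, fun h => hij (iff_of_true hi (mem_of_mem_erase h)),
      (insert_erase hi).symm⟩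
  rw [map_swap_insert hiT hjT]
  exact ⟨(hsym T hiT hjT).1.1 hS, ((hsym T hiT hjT).2 hS _).symm⟩

variable [Fintype N]

/-- The coefficient of `w_S` in the game represented by `(ψ, γ)`. -/
noncomputable def repCoeff (ψ : N → Finset K) (γ : K → ℝ) (S : Finset N) : ℝ :=
  ∑ k ∈ univ.biUnion ψ with userSet ψ k = S, γ k

theorem sum_facilities_eq_sum_repCoeff {ψ : N → Finset K} (γ : K → ℝ)
    (hC : ∀ k ∈ univ.biUnion ψ, userSet ψ k ∈ C) (g : Finset N → ℝ) :
    ∑ k ∈ univ.biUnion ψ, γ k * g (userSet ψ k) = ∑ S ∈ C, repCoeff ψ γ S * g S := by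
  rw [← sum_fiberwise_of_maps_to hC]
  refine sum_congr rfl fun S _ => ?_
  rw [repCoeff, sum_mul]
  exact sum_congr rfl fun k hk => by rw [(mem_filter.1 hk).2]

theorem IsRep.apply_eq_sum {v : {T : Finset N // T ∈ C} → ℝ} {ψ : N → Finset K} {γ : K → ℝ}
    (hrep : IsRep C v ψ γ) (T : {T : Finset N // T ∈ C}) :
    v T = ∑ S ∈ C, repCoeff ψ γ S * mmGame C S T := by
  have hψT : T.1.biUnion ψ = {k ∈ univ.biUnion ψ | (userSet ψ k ∩ T.1).Nonempty} := by
    ext k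
    simp only [mem_biUnion, mem_filter, mem_univ, true_and, Finset.Nonempty, mem_inter,
      mem_userSet]
    exact ⟨fun ⟨n, hn, hk⟩ => ⟨⟨n, hk⟩, n, hk, hn⟩, fun ⟨_, n, hk, hn⟩ => ⟨n, hn, hk⟩⟩
  rw [hrep.2 T, ← sum_facilities_eq_sum_repCoeff γ hrep.1, hψT, sum_filter]
  simp only [mmGame, mul_ite, mul_one, mul_zero]

theorem tau_eq_sum_repCoeff {ψ : N → Finset K} (γ : K → ℝ)
    (hC : ∀ k ∈ univ.biUnion ψ, userSet ψ k ∈ C) (n : N) :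
    tau ψ γ n = ∑ S ∈ C, repCoeff ψ γ S * if n ∈ S then (S.card : ℝ)⁻¹ else 0 := by
  have hψn : ψ n = {k ∈ univ.biUnion ψ | n ∈ userSet ψ k} := by
    ext k
    simp only [mem_filter, mem_biUnion, mem_univ, true_and, mem_userSet]
    exact ⟨fun h => ⟨⟨n, h⟩, h⟩, And.right⟩
  rw [tau, ← sum_facilities_eq_sum_repCoeff γ hC, hψn, sum_filter]
  simp only [mul_ite, mul_zero, div_eq_mul_inv]

variable {v : {T : Finset N // T ∈ C} → ℝ} {ψ : N → Finset K} {γ : K → ℝ} {σ : Equiv.Perm N}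

theorem repCoeff_map_eq (hli : LinearIndependent ℝ fun S : {S // S ∈ C} => mmGame C S.1)
    (hrep : IsRep C v ψ γ) (hσ : IsGameAutomorphism C v σ) :
    ∀ S ∈ C, repCoeff ψ γ (S.map σ.toEmbedding) = repCoeff ψ γ S := by
  have hσC : ∀ S ∈ C, S.map σ.toEmbedding ∈ C := fun S hS => (hσ S hS).1
  refine eq_on_of_sum_mul_mmGame_eq hli fun T => ?_
  obtain ⟨hσT, hv⟩ := hσ T.1 T.2
  calc ∑ S ∈ C, repCoeff ψ γ (S.map σ.toEmbedding) * mmGame C S T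
      = ∑ S ∈ C, repCoeff ψ γ (S.map σ.toEmbedding) *
          mmGame C (S.map σ.toEmbedding) ⟨_, hσT⟩ := by
        simp only [mmGame, ← map_inter, map_nonempty]
    _ = v ⟨_, hσT⟩ := by
        rw [sum_map_perm_eq_of_mapsTo hσC (fun S => repCoeff ψ γ S * mmGame C S ⟨_, hσT⟩),
          hrep.apply_eq_sum]
    _ = ∑ S ∈ C, repCoeff ψ γ S * mmGame C S T := by rw [hv, hrep.apply_eq_sum]

theorem tau_apply_eq_of_isGameAutomorphism
    (hli : LinearIndependent ℝ fun S : {S // S ∈ C} => mmGame C S.1)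
    (hrep : IsRep C v ψ γ) (hσ : IsGameAutomorphism C v σ) (n : N) :
    tau ψ γ (σ n) = tau ψ γ n := by
  rw [tau_eq_sum_repCoeff γ hrep.1, tau_eq_sum_repCoeff γ hrep.1,
    ← sum_map_perm_eq_of_mapsTo fun S hS => (hσ S hS).1]
  refine sum_congr rfl fun S hS => ?_
  rw [repCoeff_map_eq hli hrep hσ S hS, card_map, ← Equiv.toEmbedding_apply]
  simp only [mem_map']

end

theorem equitable_symmetry_general {N : Type} [Fintype N] [DecidableEq N]
    (C : Finset (Finset N))
    (hfs : FullSpan C) (v : {T : Finset N // T ∈ C} → ℝ)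
    (i j : N) (hsym : SymmetricPlayers C v i j)
    {K : Type} (ψ : N → Finset K) (γ : K → ℝ) (hrep : IsRep C v ψ γ) :
    tau ψ γ i = tau ψ γ j := by
  simpa using (tau_apply_eq_of_isGameAutomorphism hfs.1 hrep hsym.isGameAutomorphism_swap i).symm

/-- If `C` has full span and players `i, j` are symmetric in the
game `v : C → ℝ`, then the equitable solution `χ(v)` (the common value of
`τ(ψ, γ)` across representations `(ψ, γ)` of `v`) satisfies `χ_i(v) = χ_j(v)`. -/
theorem equitable_symmetry {N : Type} [Fintype N] [DecidableEq N] [Nonempty N]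
    (C : Finset (Finset N)) (hCne : C.Nonempty)
    (hmem : ∀ S ∈ C, S.Nonempty) (hcover : ∀ n : N, ∃ S ∈ C, n ∈ S)
    (hfs : FullSpan C) (v : {T : Finset N // T ∈ C} → ℝ)
    (i j : N) (hsym : SymmetricPlayers C v i j)
    {K : Type} (ψ : N → Finset K) (γ : K → ℝ) (hrep : IsRep C v ψ γ) :
    tau ψ γ i = tau ψ γ j :=
  equitable_symmetry_general C hfs v i j hsym ψ γ hrep
end

section
/- Assume C has full span and let v = Σ_{S∈C} α_S·w_S be the unique expansion of v : C → ℝ in the MM-basis. Define the game ṽ : 𝒩 → ℝ on all nonempty subsets of N by ṽ = Σ_{S∈C} α_S·w̃_S, where w̃_S(T) = 1 if S ∩ T ≠ ∅ and 0 if S ∩ T = ∅, for all nonempty T ⊆ N. Then the equitable solution of v equals the Shapley value of ṽ: χ(v) = φ(ṽ) in ℝ^N. -/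
open Finset
open scoped Classical

/-! The Shapley value is linear, so it suffices to compute it on the extended MM-games
`w̃_S`. A player outside `S` is a dummy for `w̃_S`; a player `n ∈ S` contributes `1` exactly
when it joins a coalition missing `S`, and the Shapley weights of the subsets of `N ∖ S` add
up to `1/|S|`. On the other side, grouping the facilities of a representation `(ψ, γ)` by
their full user-sets gives `v = Σ_S β_S w_S` and `τ_n = Σ_{S ∋ n} β_S / |S|`, where `β_S` is
the total weight of the facilities used by exactly `S`; full span forces `β = α`. -/

open Nat in
theorem Nat.sum_range_choose_mul_factorial_mul_factorial (m k : ℕ) :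
    (∑ t ∈ range (m + 1), m.choose t * t ! * (m + k - t)!) * (k + 1) = (m + k + 1)! := by
  have hterm : ∀ t ∈ range (m + 1),
      m.choose (m - t) * (m - t)! * (m + k - (m - t))! = m ! * k ! * (t + k).choose k := by
    intro t ht
    have ht : t ≤ m := Nat.lt_succ_iff.1 (mem_range.1 ht)
    refine Nat.eq_of_mul_eq_mul_right (factorial_pos t) ?_
    calc m.choose (m - t) * (m - t)! * (m + k - (m - t))! * t !
        = (m.choose (m - t) * (m - t)! * (m - (m - t))!) * (t + k)! := by
          rw [Nat.sub_sub_self ht, show m + k - (m - t) = t + k by omega]; ring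
      _ = m ! * k ! * (t + k).choose k * t ! := by
          rw [choose_mul_factorial_mul_factorial (Nat.sub_le m t),
            ← add_choose_mul_factorial_mul_factorial t k]; ring
  -- reflecting `t ↦ m - t` turns the sum into a hockey-stick sum
  calc (∑ t ∈ range (m + 1), m.choose t * t ! * (m + k - t)!) * (k + 1)
      = m ! * k ! * (m + k + 1).choose (k + 1) * (k + 1) := by
        rw [← sum_range_reflect, Nat.add_sub_cancel, Finset.sum_congr rfl hterm,
          ← Finset.mul_sum, sum_range_add_choose]
    _ = (m + k + 1)! := by
        rw [show m + k + 1 = m + (k + 1) by ring,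
          ← add_choose_mul_factorial_mul_factorial m (k + 1), factorial_succ]
        ring

/-- The game `w̃_S` on all coalitions of `N`. -/
noncomputable def mmGameExt {N : Type} [DecidableEq N] (S T : Finset N) : ℝ :=
  if (S ∩ T).Nonempty then 1 else 0

section Shapley

variable {N : Type} [Fintype N] [DecidableEq N]

theorem shapley_sum {ι : Type} [Fintype ι]
    (a : ι → ℝ) (u : ι → Finset N → ℝ) (n : N) :
    shapley (fun T => ∑ i, a i * u i T) n = ∑ i, a i * shapley (u i) n := by
  simp only [shapley, ← sum_sub_distrib, mul_sum]
  rw [sum_comm]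
  exact sum_congr rfl fun i _ => sum_congr rfl fun T _ => by ring

open Nat in
theorem sum_powerset_factorial_mul_factorial_div {S : Finset N} (hS : S.Nonempty) :
    ∑ T ∈ (univ \ S).powerset,
      ((#T)! * (Fintype.card N - 1 - #T)! / (Fintype.card N)! : ℝ) = (#S : ℝ)⁻¹ := by
  obtain ⟨k, hk⟩ : ∃ k, #S = k + 1 := Nat.exists_eq_add_one.2 hS.card_pos
  have hN : Fintype.card N = #(univ \ S) + k + 1 := by
    rw [← Finset.card_univ, ← card_sdiff_add_card_eq_card (subset_univ S), hk, add_assoc]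
  have hid := Nat.sum_range_choose_mul_factorial_mul_factorial #(univ \ S) k
  rw [sum_powerset_apply_card
      (fun t => (t ! * (Fintype.card N - 1 - t)! / (Fintype.card N)! : ℝ)),
    hN, hk, Nat.add_sub_cancel]
  simp only [nsmul_eq_mul, ← mul_div_assoc, ← sum_div]
  field_simp
  exact_mod_cast hid

theorem filter_powerset_erase_disjoint {S : Finset N} {n : N} (hn : n ∈ S) :
    (univ.erase n).powerset.filter (Disjoint S) = (univ \ S).powerset := by
  ext T
  simp only [mem_filter, mem_powerset, subset_erase, subset_sdiff, subset_univ, true_and]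
  exact ⟨fun ⟨_, h⟩ => h.symm,
    fun h => ⟨fun hnT => disjoint_left.1 h.symm hn hnT, h.symm⟩⟩

theorem shapley_mmGameExt (S : Finset N) (n : N) :
    shapley (mmGameExt S) n = if n ∈ S then (#S : ℝ)⁻¹ else 0 := by
  unfold shapley
  split_ifs with hn
  · have hmarg : ∀ T,
        mmGameExt S (insert n T) - mmGameExt S T = if Disjoint S T then 1 else 0 := by
      intro T
      have hmeet : (S ∩ insert n T).Nonempty := ⟨n, mem_inter.2 ⟨hn, mem_insert_self n T⟩⟩
      by_cases h : Disjoint S T <;>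
        simp [mmGameExt, hmeet, h, ← not_disjoint_iff_nonempty_inter]
    simp only [hmarg, mul_ite, mul_one, mul_zero]
    rw [← sum_filter, filter_powerset_erase_disjoint hn,
      sum_powerset_factorial_mul_factorial_div ⟨n, hn⟩]
  · refine sum_eq_zero fun T _ => ?_
    rw [mmGameExt, mmGameExt, inter_insert_of_notMem hn, sub_self, mul_zero]

end Shapley

section Representation

variable {N K : Type} [Fintype N] [DecidableEq N] (ψ : N → Finset K) (γ : K → ℝ)

noncomputable def userSetWeight (S : Finset N) : ℝ :=
  ∑ k ∈ (univ.biUnion ψ).filter (fun k => userSet ψ k = S), γ k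

theorem biUnion_eq_filter_userSet (T : Finset N) :
    T.biUnion ψ = (univ.biUnion ψ).filter fun k => (userSet ψ k ∩ T).Nonempty := by
  ext k
  simp only [mem_biUnion, mem_filter, mem_univ, true_and, userSet, Finset.Nonempty, mem_inter]
  exact ⟨fun ⟨n, hn, hk⟩ => ⟨⟨n, hk⟩, n, hk, hn⟩,
    fun ⟨_, n, hk, hn⟩ => ⟨n, hn, hk⟩⟩

theorem self_eq_filter_mem_userSet (n : N) :
    ψ n = (univ.biUnion ψ).filter fun k => n ∈ userSet ψ k := by
  ext k
  simp only [mem_filter, mem_biUnion, mem_univ, true_and, userSet]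
  exact ⟨fun hk => ⟨⟨n, hk⟩, hk⟩, And.right⟩

theorem sum_userSet_mul_eq_sum_userSetWeight {C : Finset (Finset N)}
    (hC : ∀ k ∈ univ.biUnion ψ, userSet ψ k ∈ C) (f : Finset N → ℝ) :
    ∑ k ∈ univ.biUnion ψ, γ k * f (userSet ψ k) =
      ∑ S : {S : Finset N // S ∈ C}, userSetWeight ψ γ S.1 * f S.1 := by
  rw [sum_coe_sort C fun S => userSetWeight ψ γ S * f S, ← sum_fiberwise_of_maps_to hC]
  refine sum_congr rfl fun S _ => ?_
  rw [userSetWeight, sum_mul]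
  exact sum_congr rfl fun k hk => by rw [(mem_filter.1 hk).2]

theorem IsRep.eq_sum_mmGame {C : Finset (Finset N)} {v : {T : Finset N // T ∈ C} → ℝ}
    (hrep : IsRep C v ψ γ) :
    v = ∑ S : {S : Finset N // S ∈ C}, userSetWeight ψ γ S.1 • mmGame C S.1 := by
  funext T
  simp only [hrep.2 T, Finset.sum_apply, Pi.smul_apply, smul_eq_mul, mmGame]
  rw [← sum_userSet_mul_eq_sum_userSetWeight ψ γ hrep.1
      fun S => if (S ∩ T.1).Nonempty then 1 else 0,
    biUnion_eq_filter_userSet, sum_filter]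
  simp only [mul_ite, mul_one, mul_zero]

theorem tau_eq_sum_userSetWeight {C : Finset (Finset N)}
    (hC : ∀ k ∈ univ.biUnion ψ, userSet ψ k ∈ C) (n : N) :
    tau ψ γ n = ∑ S : {S : Finset N // S ∈ C},
      userSetWeight ψ γ S.1 * if n ∈ S.1 then (#S.1 : ℝ)⁻¹ else 0 := by
  rw [← sum_userSet_mul_eq_sum_userSetWeight ψ γ hC
      fun S => if n ∈ S then (#S : ℝ)⁻¹ else 0,
    tau, self_eq_filter_mem_userSet ψ n, sum_filter]
  simp only [mul_ite, mul_zero, div_eq_mul_inv]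

end Representation

theorem equitable_eq_shapley_of_extension_general {N : Type} [Fintype N]
    [DecidableEq N] (C : Finset (Finset N))
    (hfs : FullSpan C) (v : {T : Finset N // T ∈ C} → ℝ)
    (α : {S : Finset N // S ∈ C} → ℝ)
    (hv : v = ∑ S : {S : Finset N // S ∈ C}, α S • mmGame C S.1)
    {K : Type} (ψ : N → Finset K) (γ : K → ℝ) (hrep : IsRep C v ψ γ) :
    ∀ n : N, tau ψ γ n =
      shapley (fun T : Finset N => ∑ S : {S : Finset N // S ∈ C},
        α S * (if (S.1 ∩ T).Nonempty then 1 else 0)) n := by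
  intro n
  have hα : ∀ S, α S = userSetWeight ψ γ S.1 :=
    Fintype.linearIndependent_iffₛ.1 hfs.1 _ _ (hv.symm.trans hrep.eq_sum_mmGame)
  rw [tau_eq_sum_userSetWeight ψ γ hrep.1]
  refine Eq.trans ?_ (shapley_sum α (fun S => mmGameExt S.1) n).symm
  simp only [shapley_mmGameExt, hα]

/-- If `C` has full span and `v = Σ_{S∈C} α_S • w_S` is the
expansion of `v : C → ℝ` in the MM-basis, then the equitable solution of `v`
(the common value of `τ(ψ, γ)` over representations `(ψ, γ)` of `v`) equals
the Shapley value of the game `ṽ = Σ_{S∈C} α_S • w̃_S` on all nonempty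
subsets of `N`, where `w̃_S(T) = 1` if `S ∩ T ≠ ∅` and `0` otherwise. -/
theorem equitable_eq_shapley_of_extension {N : Type} [Fintype N]
    [DecidableEq N] [Nonempty N] (C : Finset (Finset N)) (hCne : C.Nonempty)
    (hmem : ∀ S ∈ C, S.Nonempty) (hcover : ∀ n : N, ∃ S ∈ C, n ∈ S)
    (hfs : FullSpan C) (v : {T : Finset N // T ∈ C} → ℝ)
    (α : {S : Finset N // S ∈ C} → ℝ)
    (hv : v = ∑ S : {S : Finset N // S ∈ C}, α S • mmGame C S.1)
    {K : Type} (ψ : N → Finset K) (γ : K → ℝ) (hrep : IsRep C v ψ γ) :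
    ∀ n : N, tau ψ γ n =
      shapley (fun T : Finset N => ∑ S : {S : Finset N // S ∈ C},
        α S * (if (S.1 ∩ T).Nonempty then 1 else 0)) n :=
  equitable_eq_shapley_of_extension_general C hfs v α hv ψ γ hrep
end
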